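/- Let (U, S) be a Set-Cover instance with U a finite nonempty universe and S = {S_1, …, S_m} a family of subsets of U with ⋃_{i=1}^m S_i = U, and let A(U, S) be the automaton with state set U ∪ {q̂}, alphabet {a_1, …, a_m}, δ(u, a_i) = q̂ if u ∈ S_i, δ(u, a_i) = u if u ∉ S_i, and δ(q̂, a_i) = q̂. Then a word w = a_{i_1} a_{i_2} ⋯ a_{i_t} is a reset word for A(U, S) if and only if S_{i_1} ∪ S_{i_2} ∪ ⋯ ∪ S_{i_t} = U. -/

import Mathlib

/-- The action of a word `w` on a state `q` in the DFA with transition function `δ`. -/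
def wordAct {Q A : Type*} (δ : Q → A → Q) (q : Q) (w : List A) : Q :=
  w.foldl δ q

/-- `w` is a reset word: it sends all states to one common state. -/
def IsResetWord {Q A : Type*} (δ : Q → A → Q) (w : List A) : Prop :=
  ∀ p q : Q, wordAct δ p w = wordAct δ q w

/-- The Set-Cover automaton `A(U, S)`: states are `U ∪ {q̂}` (with `none` playing
the role of the sink state `q̂`), and the letter `a_i` sends `u` to `q̂` if `u ∈ S i`
and fixes `u` otherwise; `q̂` is fixed by all letters. -/
def scAut {U : Type*} [DecidableEq U] {m : ℕ} (S : Fin m → Finset U) :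
    Option U → Fin m → Option U
  | none, _ => none
  | some u, i => if u ∈ S i then none else some u

/-! A word resets the Set-Cover automaton exactly when it drives every state into the sink
`q̂`, and a state `u` reaches `q̂` exactly when some letter of the word belongs to a set
containing `u`. -/

section Sink

variable {Q A : Type*} {δ : Q → A → Q} {s : Q}

theorem wordAct_cons (δ : Q → A → Q) (q : Q) (a : A) (w : List A) :
    wordAct δ q (a :: w) = wordAct δ (δ q a) w :=
  rfl

theorem wordAct_sink (hs : ∀ a, δ s a = s) (w : List A) : wordAct δ s w = s := by
  induction w with
  | nil => rfl
  | cons a w ih => rw [wordAct_cons, hs, ih]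

theorem isResetWord_iff_forall_wordAct_eq_sink (hs : ∀ a, δ s a = s) (w : List A) :
    IsResetWord δ w ↔ ∀ q, wordAct δ q w = s := by
  constructor
  · intro h q
    rw [h q s, wordAct_sink hs]
  · intro h p q
    rw [h p, h q]

end Sink

section SetCover

variable {U : Type*} [DecidableEq U] {m : ℕ} (S : Fin m → Finset U)

theorem scAut_none (i : Fin m) : scAut S none i = none :=
  rfl

theorem wordAct_scAut_some_eq_none_iff (u : U) (w : List (Fin m)) :
    wordAct (scAut S) (some u) w = none ↔ ∃ i ∈ w, u ∈ S i := by
  induction w with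
  | nil => simp [wordAct]
  | cons a w ih =>
    by_cases hu : u ∈ S a
    · simp [wordAct_cons, scAut, hu, wordAct_sink (scAut_none S)]
    · simp [wordAct_cons, scAut, hu, ih]

end SetCover

theorem scAut_isResetWord_iff_cover_general {U : Type*} [DecidableEq U]
    {m : ℕ} (S : Fin m → Finset U)
    (w : List (Fin m)) :
    IsResetWord (scAut S) w ↔ ∀ u : U, ∃ i ∈ w, u ∈ S i := by
  rw [isResetWord_iff_forall_wordAct_eq_sink (scAut_none S), Option.forall]
  simp only [wordAct_sink (scAut_none S), wordAct_scAut_some_eq_none_iff, true_and]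

/-- A word `w = a_{i₁} ⋯ a_{iₜ}` is a reset word for the Set-Cover automaton
`A(U, S)` if and only if `S_{i₁} ∪ ⋯ ∪ S_{iₜ} = U`. -/
theorem scAut_isResetWord_iff_cover {U : Type*} [Fintype U] [DecidableEq U]
    [Nonempty U] {m : ℕ} (S : Fin m → Finset U) (hcover : ∀ u : U, ∃ i, u ∈ S i)
    (w : List (Fin m)) :
    IsResetWord (scAut S) w ↔ ∀ u : U, ∃ i ∈ w, u ∈ S i :=
  scAut_isResetWord_iff_cover_general S w
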